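/- For every integer k ≥ 1 and every smooth f : ℝ × ℝ^{n+1} → ℝ one has, identically, Δ̃^k(Q·f) − Q·Δ̃^k f = −2k·Δ̃^{k−1}( 2·Xf + (n+4−2k)·f ). -/

import Mathlib

/-- The flat Fefferman–Graham ambient space `ℝ × ℝ^{n+1}` of the standard conformal
`n`-sphere, with coordinates `(t, x⁰, …, xⁿ)`. -/
abbrev Amb (n : ℕ) : Type := ℝ × (Fin (n+1) → ℝ)

/-- The partial derivative `∂_t`. -/
noncomputable def ptD {n : ℕ} (f : Amb n → ℝ) (p : Amb n) : ℝ :=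
  fderiv ℝ f p (1, 0)

/-- The partial derivative `∂_{xⁱ}`. -/
noncomputable def pxD {n : ℕ} (i : Fin (n+1)) (f : Amb n → ℝ) (p : Amb n) : ℝ :=
  fderiv ℝ f p (0, Pi.single i 1)

/-- The flat ambient Laplacian `Δ̃f = ∂_t²f − Σᵢ ∂_{xⁱ}²f` (convention `Δ ≥ 0` for the
metric `g̃ = −dt² + Σᵢ (dxⁱ)²`). -/
noncomputable def LapA {n : ℕ} (f : Amb n → ℝ) : Amb n → ℝ :=
  fun p => ptD (fun q => ptD f q) p - ∑ i, pxD i (fun q => pxD i f q) p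

/-- The Euler (dilation) operator `Xf = t∂_t f + Σᵢ xⁱ∂_{xⁱ} f`. -/
noncomputable def EulerA {n : ℕ} (f : Amb n → ℝ) (p : Amb n) : ℝ :=
  p.1 * ptD f p + ∑ i, p.2 i * pxD i f p

/-- The function `Q(t,x) = |x|² − t²`. -/
def QA {n : ℕ} (p : Amb n) : ℝ := (∑ i, (p.2 i)^2) - p.1^2

/-- The half-space `{(t,x) : t > 0}`. -/
def HS (n : ℕ) : Set (Amb n) := {p | 0 < p.1}

/-!
Every operator involved is built from constant-coefficient derivatives `∂_v`, so the identity
reduces to three commutation rules. The Leibniz rule, with `∂_v Q` linear and `∂_v² Q = 2 Q(v)`,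
gives `Δ̃(Qf) = QΔ̃f − 2(2Xf + (n+2)f)`. Writing the Euler operator coordinate-free as
`Xf(p) = Df(p) p` and using symmetry of the second derivative gives `∂_v X = (X + 1) ∂_v`, hence
`Δ̃X = (X + 2)Δ̃` and `Δ̃^j X = (X + 2j)Δ̃^j`. With linearity of `Δ̃` on smooth functions, induction
on `k` gives `Δ̃^k(Qf) = QΔ̃^k f − 2k(2X + n + 2k)Δ̃^{k-1}f`.
-/

open scoped ContDiff

section DirDeriv

variable {E : Type*} [NormedAddCommGroup E] [NormedSpace ℝ E]

noncomputable def dirDeriv (v : E) (f : E → ℝ) : E → ℝ := fun p => fderiv ℝ f p v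

noncomputable def euler (f : E → ℝ) : E → ℝ := fun p => fderiv ℝ f p p

variable {v w : E} {f g : E → ℝ}

theorem ContDiff.dirDeriv (hf : ContDiff ℝ ∞ f) : ContDiff ℝ ∞ (dirDeriv v f) :=
  (hf.fderiv_right le_rfl).clm_apply contDiff_const

theorem ContDiff.euler (hf : ContDiff ℝ ∞ f) : ContDiff ℝ ∞ (euler f) :=
  (hf.fderiv_right le_rfl).clm_apply contDiff_id

theorem dirDeriv_add (hf : Differentiable ℝ f) (hg : Differentiable ℝ g) :
    dirDeriv v (f + g) = dirDeriv v f + dirDeriv v g := by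
  ext p; simp [dirDeriv, fderiv_add (hf p) (hg p)]

theorem dirDeriv_sub (hf : Differentiable ℝ f) (hg : Differentiable ℝ g) :
    dirDeriv v (f - g) = dirDeriv v f - dirDeriv v g := by
  ext p; simp [dirDeriv, fderiv_sub (hf p) (hg p)]

theorem dirDeriv_smul (c : ℝ) (hf : Differentiable ℝ f) :
    dirDeriv v (c • f) = c • dirDeriv v f := by
  ext p; simp [dirDeriv, fderiv_const_smul (hf p)]

theorem dirDeriv_mul (hf : Differentiable ℝ f) (hg : Differentiable ℝ g) :
    dirDeriv v (f * g) = dirDeriv v f * g + f * dirDeriv v g := by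
  ext p; simp [dirDeriv, fderiv_mul (hf p) (hg p)]; ring

theorem dirDeriv_dirDeriv_mul (hf : ContDiff ℝ ∞ f) (hg : ContDiff ℝ ∞ g) :
    dirDeriv v (dirDeriv v (f * g)) =
      dirDeriv v (dirDeriv v f) * g + (2 : ℝ) • (dirDeriv v f * dirDeriv v g) +
        f * dirDeriv v (dirDeriv v g) := by
  have hf₁ := hf.differentiable (by simp)
  have hg₁ := hg.differentiable (by simp)
  have hf₂ := hf.dirDeriv (v := v) |>.differentiable (by simp)
  have hg₂ := hg.dirDeriv (v := v) |>.differentiable (by simp)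
  rw [dirDeriv_mul hf₁ hg₁, dirDeriv_add (hf₂.mul hg₁) (hf₁.mul hg₂), dirDeriv_mul hf₂ hg₁,
    dirDeriv_mul hf₁ hg₂, two_smul]
  ring

theorem dirDeriv_dirDeriv_add (hf : ContDiff ℝ ∞ f) (hg : ContDiff ℝ ∞ g) :
    dirDeriv v (dirDeriv w (f + g)) = dirDeriv v (dirDeriv w f) + dirDeriv v (dirDeriv w g) := by
  rw [dirDeriv_add (hf.differentiable (by simp)) (hg.differentiable (by simp)),
    dirDeriv_add (hf.dirDeriv.differentiable (by simp)) (hg.dirDeriv.differentiable (by simp))]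

theorem dirDeriv_dirDeriv_sub (hf : ContDiff ℝ ∞ f) (hg : ContDiff ℝ ∞ g) :
    dirDeriv v (dirDeriv w (f - g)) = dirDeriv v (dirDeriv w f) - dirDeriv v (dirDeriv w g) := by
  rw [dirDeriv_sub (hf.differentiable (by simp)) (hg.differentiable (by simp)),
    dirDeriv_sub (hf.dirDeriv.differentiable (by simp)) (hg.dirDeriv.differentiable (by simp))]

theorem dirDeriv_dirDeriv_smul (c : ℝ) (hf : ContDiff ℝ ∞ f) :
    dirDeriv v (dirDeriv w (c • f)) = c • dirDeriv v (dirDeriv w f) := by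
  rw [dirDeriv_smul c (hf.differentiable (by simp)),
    dirDeriv_smul c (hf.dirDeriv.differentiable (by simp))]

theorem euler_sub (hf : Differentiable ℝ f) (hg : Differentiable ℝ g) :
    euler (f - g) = euler f - euler g := by
  ext p; simp [euler, fderiv_sub (hf p) (hg p)]

theorem euler_sum {ι : Type*} (s : Finset ι) {F : ι → E → ℝ} (hF : ∀ i, Differentiable ℝ (F i)) :
    euler (∑ i ∈ s, F i) = ∑ i ∈ s, euler (F i) := by
  ext p; simp [euler, fderiv_sum (fun i _ => hF i p)]

theorem fderiv_dirDeriv {p : E} (hf : DifferentiableAt ℝ (fderiv ℝ f) p) (u : E) :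
    fderiv ℝ (dirDeriv v f) p u = fderiv ℝ (fderiv ℝ f) p u v := by
  unfold dirDeriv
  rw [fderiv_clm_apply hf (differentiableAt_const v)]
  simp

theorem dirDeriv_euler (hf : ContDiff ℝ 2 f) :
    dirDeriv v (euler f) = dirDeriv v f + euler (dirDeriv v f) := by
  ext p
  have hDf : Differentiable ℝ (fderiv ℝ f) := (hf.fderiv_right le_rfl).differentiable one_ne_zero
  have hsymm := hf.contDiffAt.isSymmSndFDerivAt (x := p) (by simp) v p
  have hderiv : HasFDerivAt (euler f) (fderiv ℝ f p + (fderiv ℝ (fderiv ℝ f) p).flip p) p := by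
    unfold euler
    simpa using (hDf p).hasFDerivAt.clm_apply (hasFDerivAt_id p)
  simp [dirDeriv, euler, hderiv.fderiv, fderiv_dirDeriv (hDf p), hsymm]

theorem dirDeriv_dirDeriv_euler (hf : ContDiff ℝ ∞ f) :
    dirDeriv v (dirDeriv v (euler f)) =
      (2 : ℝ) • dirDeriv v (dirDeriv v f) + euler (dirDeriv v (dirDeriv v f)) := by
  have hf₁ := hf.dirDeriv (v := v)
  rw [dirDeriv_euler (hf.of_le ENat.LEInfty.out),
    dirDeriv_add (hf₁.differentiable (by simp)) (hf₁.euler.differentiable (by simp)),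
    dirDeriv_euler (hf₁.of_le ENat.LEInfty.out), two_smul, add_assoc]

end DirDeriv

section Ambient

variable {n : ℕ}

def timeDir (n : ℕ) : Amb n := (1, 0)

def spaceDir (i : Fin (n+1)) : Amb n := (0, Pi.single i 1)

theorem ptD_eq_dirDeriv (f : Amb n → ℝ) : ptD f = dirDeriv (timeDir n) f := rfl

theorem pxD_eq_dirDeriv (i : Fin (n+1)) (f : Amb n → ℝ) : pxD i f = dirDeriv (spaceDir i) f := rfl

theorem LapA_eq_sub_sum (f : Amb n → ℝ) :
    LapA f = dirDeriv (timeDir n) (dirDeriv (timeDir n) f) -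
      ∑ i, dirDeriv (spaceDir i) (dirDeriv (spaceDir i) f) := by
  ext p; simp only [Pi.sub_apply, Finset.sum_apply]; rfl

theorem EulerA_eq_euler (f : Amb n → ℝ) : EulerA f = euler f := by
  ext p
  have hp : p = p.1 • timeDir n + ∑ i, p.2 i • spaceDir i := by
    ext <;> simp [timeDir, spaceDir, Prod.fst_sum, Prod.snd_sum, Pi.single_apply]
  calc EulerA f p = fderiv ℝ f p (p.1 • timeDir n + ∑ i, p.2 i • spaceDir i) := by
        simp only [map_add, map_sum, map_smul, smul_eq_mul]; rfl
    _ = euler f p := by rw [← hp]; rfl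

theorem contDiff_QA : ContDiff ℝ ∞ (QA (n := n)) := by
  unfold QA; fun_prop

theorem dirDeriv_QA (v : Amb n) :
    dirDeriv v QA = fun p => 2 * (∑ i, p.2 i * v.2 i - p.1 * v.1) := by
  ext p
  unfold dirDeriv QA
  simp (disch := fun_prop) [fderiv_fun_sub, fderiv_fun_sum, fderiv_fun_pow, fderiv_fst,
    fderiv_apply, fderiv_snd]
  rw [mul_sub, Finset.mul_sum]
  simp only [mul_assoc]

theorem dirDeriv_dirDeriv_QA (v : Amb n) : dirDeriv v (dirDeriv v QA) = fun _ => 2 * QA v := by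
  rw [dirDeriv_QA]
  ext p
  unfold dirDeriv QA
  simp (disch := fun_prop) [fderiv_fun_sub, fderiv_fun_sum, fderiv_const_mul, fderiv_fun_mul,
    fderiv_fst, fderiv_apply, fderiv_snd, sq]

theorem QA_timeDir : QA (timeDir n) = -1 := by simp [QA, timeDir]

theorem QA_spaceDir (i : Fin (n+1)) : QA (spaceDir i) = 1 := by
  simp [QA, spaceDir, Pi.single_apply]

theorem LapA_QA_mul {f : Amb n → ℝ} (hf : ContDiff ℝ ∞ f) :
    LapA (QA * f) = QA * LapA f - (2 : ℝ) • ((2 : ℝ) • euler f + ((n : ℝ) + 2) • f) := by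
  have h₀ (p : Amb n) : dirDeriv (timeDir n) QA p = -2 * p.1 := by simp [dirDeriv_QA, timeDir]
  have hᵢ (i) (p : Amb n) : dirDeriv (spaceDir i) QA p = 2 * p.2 i := by
    simp [dirDeriv_QA, spaceDir, Pi.single_apply]
  ext p
  simp only [LapA_eq_sub_sum, ← EulerA_eq_euler, EulerA, ptD_eq_dirDeriv, pxD_eq_dirDeriv,
    dirDeriv_dirDeriv_mul contDiff_QA hf, dirDeriv_dirDeriv_QA, h₀, hᵢ, QA_timeDir, QA_spaceDir,
    Pi.sub_apply, Finset.sum_apply, Pi.add_apply, Pi.mul_apply, Pi.smul_apply, smul_eq_mul]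
  simp only [nsmul_eq_mul, Finset.sum_add_distrib, Finset.sum_const, Finset.card_univ,
    Fintype.card_fin, mul_assoc, ← Finset.mul_sum]
  push_cast
  ring

theorem ContDiff.LapA {f : Amb n → ℝ} (hf : ContDiff ℝ ∞ f) : ContDiff ℝ ∞ (LapA f) := by
  rw [LapA_eq_sub_sum, Finset.sum_fn]
  exact hf.dirDeriv.dirDeriv.sub (ContDiff.sum fun i _ => hf.dirDeriv.dirDeriv)

theorem ContDiff.iterate_LapA {f : Amb n → ℝ} (hf : ContDiff ℝ ∞ f) (k : ℕ) :
    ContDiff ℝ ∞ (_root_.LapA^[k] f) := by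
  induction k with
  | zero => exact hf
  | succ k ih => rw [Function.iterate_succ_apply']; exact ih.LapA

theorem LapA_add {f g : Amb n → ℝ} (hf : ContDiff ℝ ∞ f) (hg : ContDiff ℝ ∞ g) :
    LapA (f + g) = LapA f + LapA g := by
  simp only [LapA_eq_sub_sum, dirDeriv_dirDeriv_add hf hg, Finset.sum_add_distrib]
  abel

theorem LapA_sub {f g : Amb n → ℝ} (hf : ContDiff ℝ ∞ f) (hg : ContDiff ℝ ∞ g) :
    LapA (f - g) = LapA f - LapA g := by
  simp only [LapA_eq_sub_sum, dirDeriv_dirDeriv_sub hf hg, Finset.sum_sub_distrib]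
  abel

theorem LapA_smul (c : ℝ) {f : Amb n → ℝ} (hf : ContDiff ℝ ∞ f) : LapA (c • f) = c • LapA f := by
  simp only [LapA_eq_sub_sum, dirDeriv_dirDeriv_smul c hf, ← Finset.smul_sum, smul_sub]

theorem LapA_euler {f : Amb n → ℝ} (hf : ContDiff ℝ ∞ f) :
    LapA (euler f) = euler (LapA f) + (2 : ℝ) • LapA f := by
  have hf₂ {v w : Amb n} : Differentiable ℝ (dirDeriv v (dirDeriv w f)) :=
    hf.dirDeriv.dirDeriv.differentiable (by simp)
  rw [LapA_eq_sub_sum, LapA_eq_sub_sum f, euler_sub hf₂ (Differentiable.sum fun i _ => hf₂),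
    euler_sum _ fun i => hf₂]
  simp only [dirDeriv_dirDeriv_euler hf, Finset.sum_add_distrib, ← Finset.smul_sum, smul_sub]
  abel

theorem iterate_LapA_add {f g : Amb n → ℝ} (hf : ContDiff ℝ ∞ f) (hg : ContDiff ℝ ∞ g) (k : ℕ) :
    LapA^[k] (f + g) = LapA^[k] f + LapA^[k] g := by
  induction k with
  | zero => rfl
  | succ k ih =>
    simp only [Function.iterate_succ_apply', ih, LapA_add (hf.iterate_LapA k) (hg.iterate_LapA k)]

theorem iterate_LapA_smul (c : ℝ) {f : Amb n → ℝ} (hf : ContDiff ℝ ∞ f) (k : ℕ) :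
    LapA^[k] (c • f) = c • LapA^[k] f := by
  induction k with
  | zero => rfl
  | succ k ih => simp only [Function.iterate_succ_apply', ih, LapA_smul c (hf.iterate_LapA k)]

theorem iterate_LapA_euler {f : Amb n → ℝ} (hf : ContDiff ℝ ∞ f) (k : ℕ) :
    LapA^[k] (euler f) = euler (LapA^[k] f) + (2 * k : ℝ) • LapA^[k] f := by
  induction k with
  | zero => simp
  | succ k ih =>
    have hfk := hf.iterate_LapA k
    rw [Function.iterate_succ_apply', ih, LapA_add hfk.euler ?_, LapA_euler hfk, LapA_smul _ hfk,
      Function.iterate_succ_apply']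
    · push_cast
      module
    · exact hfk.const_smul (2 * k : ℝ)

theorem iterate_LapA_QA_mul {f : Amb n → ℝ} (hf : ContDiff ℝ ∞ f) (k : ℕ) :
    LapA^[k + 1] (QA * f) = QA * LapA^[k + 1] f -
      (2 * (k + 1) : ℝ) • ((2 : ℝ) • euler (LapA^[k] f) + (n + 2 * (k + 1) : ℝ) • LapA^[k] f) := by
  induction k with
  | zero => simp [LapA_QA_mul hf]
  | succ k ih =>
    have hfk := hf.iterate_LapA k
    have hek := hfk.euler
    have hfk' := hf.iterate_LapA (k + 1)
    have hQ : ContDiff ℝ ∞ (QA (n := n)) := contDiff_QA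
    rw [Function.iterate_succ_apply' _ (k + 1), ih]
    -- `fun_prop` does not see through `f + g`, `c • f`, `f * g` on functions; unfold them first.
    simp (disch := (try simp only [Pi.add_def, Pi.smul_def, Pi.mul_def]); fun_prop) only
      [LapA_sub, LapA_add, LapA_smul, LapA_QA_mul, LapA_euler]
    rw [← Function.iterate_succ_apply' LapA k, ← Function.iterate_succ_apply' LapA (k + 1)]
    push_cast
    module

end Ambient

theorem stmt_7_general (n k : ℕ)
    (f : Amb n → ℝ) (hf : ContDiff ℝ (⊤ : ℕ∞) f) (p : Amb n) :
    LapA^[k] (fun q => QA q * f q) p - QA p * LapA^[k] f p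
      = -(2*(k:ℝ)) * LapA^[k-1] (fun q => 2 * EulerA f q + ((n:ℝ) + 4 - 2*(k:ℝ)) * f q) p := by
  obtain _ | k := k
  · simp
  have hX : (fun q => 2 * EulerA f q + ((n:ℝ) + 4 - 2 * ((k + 1 : ℕ) : ℝ)) * f q) =
      (2 : ℝ) • euler f + ((n:ℝ) + 4 - 2 * ((k + 1 : ℕ) : ℝ)) • f := by
    rw [EulerA_eq_euler]; rfl
  have hEuler := hf.euler
  rw [Nat.add_sub_cancel, hX, show (fun q => QA q * f q) = QA * f from rfl, iterate_LapA_QA_mul hf]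
  simp (disch := (try simp only [Pi.smul_def]); fun_prop) only [iterate_LapA_add,
    iterate_LapA_smul, iterate_LapA_euler, Pi.add_apply, Pi.sub_apply, Pi.mul_apply, Pi.smul_apply,
    smul_eq_mul]
  push_cast
  ring

/-- GJMS sl₂-commutator identity, paper's eqn (2.3): for every `k ≥ 1`
and smooth `f`, `Δ̃^k(Q·f) − Q·Δ̃^k f = −2k·Δ̃^{k−1}(2·Xf + (n+4−2k)·f)`. -/
theorem stmt_7 (n k : ℕ) (hn : 1 ≤ n) (hk : 1 ≤ k)
    (f : Amb n → ℝ) (hf : ContDiff ℝ (⊤ : ℕ∞) f) (p : Amb n) :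
    LapA^[k] (fun q => QA q * f q) p - QA p * LapA^[k] f p
      = -(2*(k:ℝ)) * LapA^[k-1] (fun q => 2 * EulerA f q + ((n:ℝ) + 4 - 2*(k:ℝ)) * f q) p :=
  stmt_7_general n k f hf p
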